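/- arXiv:2501.11135 — 2 statements merged into one kernel-verified Lean document; each statement's English description precedes it below -/
import Mathlib

section
/- Let d ∈ ℕ, let L : ℝ^d → ℝ be differentiable, let λ > 0 and γ > 0. Let m̄ ∈ {0,1}^d be a binary vector with support S = {i : m̄_i = 1} of cardinality k, and suppose ‖∇L(m̄)‖_∞ ≤ λ. Let m* ∈ [0,1]^d be a global minimizer over [0,1]^d of m ↦ L(m) + λ‖m‖₁, i.e. L(m*) + λ‖m*‖₁ ≤ L(m) + λ‖m‖₁ for all m ∈ [0,1]^d. Assume the strong-convexity inequality L(m*) ≥ L(m̄) + ∇L(m̄)ᵀ(m* − m̄) + (γ/2)‖m* − m̄‖₂². Then ‖m* − m̄‖₂ ≤ 4λ√k/γ. -/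
/-!
Comparing the objective at `m*` and at `m̄` and adding the strong-convexity inequality gives
`γ/2 ‖Δ‖² ≤ -∇L(m̄)ᵀΔ + λ(‖m̄‖₁ - ‖m*‖₁) ≤ λ ∑ᵢ (|Δᵢ| + |m̄ᵢ| - |m*ᵢ|)` with `Δ = m* - m̄`.
Because `m̄` is binary and `m*` lies in the cube, the `i`-th summand vanishes off `S` and equals
`2|Δᵢ|` on `S`, so by Cauchy–Schwarz on `S` the right side is at most `2λ√k ‖Δ‖`;
dividing by `‖Δ‖` gives the bound.
-/

open Finset

variable {ι : Type*} [Fintype ι]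

theorem neg_inner_le_mul_sum_abs {g : EuclideanSpace ℝ ι} {lam : ℝ} (hg : ∀ i, |g i| ≤ lam)
    (v : EuclideanSpace ℝ ι) : -inner ℝ g v ≤ lam * ∑ i, |v i| := by
  rw [PiLp.inner_apply, ← sum_neg_distrib, mul_sum]
  refine sum_le_sum fun i _ => ?_
  calc -inner ℝ (g i) (v i) ≤ |v i * g i| := by simpa using neg_le_abs (v i * g i)
    _ = |g i| * |v i| := by rw [abs_mul, mul_comm]
    _ ≤ lam * |v i| := mul_le_mul_of_nonneg_right (hg i) (abs_nonneg _)

theorem abs_sub_add_abs_sub_abs_of_mem_Icc {x b : ℝ} (hx : x ∈ Set.Icc (0 : ℝ) 1)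
    (hb : b = 0 ∨ b = 1) : |x - b| + |b| - |x| = if b = 1 then 2 * |x - b| else 0 := by
  obtain ⟨hx0, hx1⟩ := hx
  rcases hb with rfl | rfl
  · simp [abs_of_nonneg hx0]
  · rw [if_pos rfl, abs_of_nonpos (by linarith), abs_one, abs_of_nonneg hx0]
    ring

theorem sum_abs_sub_add_abs_sub_abs_of_binary {m b : ι → ℝ}
    (hm : ∀ i, m i ∈ Set.Icc (0 : ℝ) 1) (hb : ∀ i, b i = 0 ∨ b i = 1) :
    ∑ i, (|m i - b i| + |b i| - |m i|) = 2 * ∑ i ∈ univ.filter (b · = 1), |m i - b i| := by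
  rw [sum_filter, mul_sum]
  refine sum_congr rfl fun i _ => ?_
  rw [abs_sub_add_abs_sub_abs_of_mem_Icc (hm i) (hb i), mul_ite, mul_zero]

theorem sum_abs_le_sqrt_card_mul_norm (s : Finset ι) (v : EuclideanSpace ℝ ι) :
    ∑ i ∈ s, |v i| ≤ √(#s) * ‖v‖ := by
  rw [EuclideanSpace.norm_eq, ← Real.sqrt_mul (Nat.cast_nonneg _)]
  refine Real.le_sqrt_of_sq_le ?_
  calc (∑ i ∈ s, |v i|) ^ 2 ≤ #s * ∑ i ∈ s, |v i| ^ 2 := sq_sum_le_card_mul_sum_sq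
    _ ≤ #s * ∑ i, ‖v i‖ ^ 2 := by
      simp only [Real.norm_eq_abs]
      gcongr
      exact subset_univ s

theorem le_div_of_mul_sq_le_mul {x c γ : ℝ} (hγ : 0 < γ) (hc : 0 ≤ c) (hx : 0 ≤ x)
    (h : γ / 2 * x ^ 2 ≤ c * x) : x ≤ 2 * c / γ := by
  rcases hx.eq_or_lt with rfl | hx
  · positivity
  · rw [le_div_iff₀ hγ]
    nlinarith

theorem l1_mask_error_bound_general
    (d : ℕ) (L : EuclideanSpace ℝ (Fin d) → ℝ)
    (lam γ : ℝ) (hlam : 0 < lam) (hγ : 0 < γ)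
    (mbar : EuclideanSpace ℝ (Fin d)) (hbin : ∀ i, mbar i = 0 ∨ mbar i = 1)
    (k : ℕ) (hk : (Finset.univ.filter fun i => mbar i = 1).card = k)
    (hgrad : ∀ i, |gradient L mbar i| ≤ lam)
    (mstar : EuclideanSpace ℝ (Fin d)) (hms : ∀ i, mstar i ∈ Set.Icc (0 : ℝ) 1)
    (hmin : ∀ m : EuclideanSpace ℝ (Fin d), (∀ i, m i ∈ Set.Icc (0 : ℝ) 1) →
      L mstar + lam * ∑ i, |mstar i| ≤ L m + lam * ∑ i, |m i|)
    (hsc : L mstar ≥ L mbar + (inner ℝ (gradient L mbar) (mstar - mbar) : ℝ)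
      + γ / 2 * ‖mstar - mbar‖ ^ 2) :
    ‖mstar - mbar‖ ≤ 4 * lam * Real.sqrt k / γ := by
  have hmbar : ∀ i, mbar i ∈ Set.Icc (0 : ℝ) 1 := fun i => by
    rcases hbin i with h | h <;> simp [h]
  have hopt := hmin mbar hmbar
  have hgrad_term := neg_inner_le_mul_sum_abs hgrad (mstar - mbar)
  have hcs := sum_abs_le_sqrt_card_mul_norm (univ.filter fun i => mbar i = 1) (mstar - mbar)
  rw [hk] at hcs
  simp only [PiLp.sub_apply] at hgrad_term hcs
  have hbasic : γ / 2 * ‖mstar - mbar‖ ^ 2 ≤ 2 * lam * √k * ‖mstar - mbar‖ :=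
    calc γ / 2 * ‖mstar - mbar‖ ^ 2
        ≤ lam * ∑ i, (|mstar i - mbar i| + |mbar i| - |mstar i|) := by
          simp only [sum_sub_distrib, sum_add_distrib]
          linarith
      _ = 2 * lam * ∑ i ∈ univ.filter fun i => mbar i = 1, |mstar i - mbar i| := by
          rw [sum_abs_sub_add_abs_sub_abs_of_binary hms hbin, mul_left_comm, mul_assoc]
      _ ≤ 2 * lam * √k * ‖mstar - mbar‖ := by
          rw [mul_assoc _ √k]
          gcongr
  calc ‖mstar - mbar‖ ≤ 2 * (2 * lam * √k) / γ :=
        le_div_of_mul_sq_le_mul hγ (by positivity) (norm_nonneg _) hbasic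
    _ = 4 * lam * √k / γ := by ring

/-- Theorem 1 of the paper: error bound for the ℓ1-regularized relaxed mask estimate.
Vectors live in `EuclideanSpace ℝ (Fin d)`, so `‖·‖` is the Euclidean (ℓ2) norm;
the ℓ1 norm is written as `∑ i, |· i|`, the ℓ∞ bound on the gradient coordinatewise. -/
theorem l1_mask_error_bound
    (d : ℕ) (L : EuclideanSpace ℝ (Fin d) → ℝ) (hL : Differentiable ℝ L)
    (lam γ : ℝ) (hlam : 0 < lam) (hγ : 0 < γ)
    (mbar : EuclideanSpace ℝ (Fin d)) (hbin : ∀ i, mbar i = 0 ∨ mbar i = 1)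
    (k : ℕ) (hk : (Finset.univ.filter fun i => mbar i = 1).card = k)
    (hgrad : ∀ i, |gradient L mbar i| ≤ lam)
    (mstar : EuclideanSpace ℝ (Fin d)) (hms : ∀ i, mstar i ∈ Set.Icc (0 : ℝ) 1)
    (hmin : ∀ m : EuclideanSpace ℝ (Fin d), (∀ i, m i ∈ Set.Icc (0 : ℝ) 1) →
      L mstar + lam * ∑ i, |mstar i| ≤ L m + lam * ∑ i, |m i|)
    (hsc : L mstar ≥ L mbar + (inner ℝ (gradient L mbar) (mstar - mbar) : ℝ)
      + γ / 2 * ‖mstar - mbar‖ ^ 2) :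
    ‖mstar - mbar‖ ≤ 4 * lam * Real.sqrt k / γ :=
  l1_mask_error_bound_general d L lam γ hlam hγ mbar hbin k hk hgrad mstar hms hmin hsc
end

section
/- Let d ∈ ℕ, let L : ℝ^d → ℝ be differentiable, λ > 0, γ > 0. Let m̄ ∈ {0,1}^d with support S and complement S^c, and suppose ‖∇L(m̄)‖_∞ ≤ λ. Let m* ∈ [0,1]^d satisfy L(m*) + λ‖m*‖₁ ≤ L(m) + λ‖m‖₁ for all m ∈ [0,1]^d, and assume L(m*) ≥ L(m̄) + ∇L(m̄)ᵀ(m* − m̄) + (γ/2)‖m* − m̄‖₂². Then, with h = m* − m̄ and h_S the vector agreeing with h on S and zero elsewhere, (γ/2)‖h‖₂² ≤ 2λ‖h_S‖₁. -/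
open Finset

/-! Comparing the minimizer `m*` with the admissible point `m̄` and using the strong-convexity
lower bound gives `(γ/2)‖h‖₂² ≤ λ(‖m̄‖₁ - ‖m*‖₁) - ∇L(m̄)ᵀh ≤ λ(‖m̄‖₁ - ‖m*‖₁ + ‖h‖₁)`.
Coordinatewise, for `m̄ᵢ ∈ {0, 1}` and `m*ᵢ ∈ [0, 1]`, the bracket vanishes off the support
and equals `2|hᵢ|` on it. -/

theorem EuclideanSpace.abs_inner_le_mul_sum_abs {ι : Type*} [Fintype ι]
    {g h : EuclideanSpace ℝ ι} {c : ℝ} (hg : ∀ i, |g i| ≤ c) :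
    |inner ℝ g h| ≤ c * ∑ i, |h i| := by
  rw [PiLp.inner_apply, mul_sum]
  refine (abs_sum_le_sum_abs _ _).trans (sum_le_sum fun i _ => ?_)
  rw [Real.inner_apply, abs_mul]
  exact mul_le_mul_of_nonneg_right (hg i) (abs_nonneg _)

theorem abs_sub_abs_add_abs_sub_of_binary {b x : ℝ} (hb : b = 0 ∨ b = 1)
    (hx : x ∈ Set.Icc (0 : ℝ) 1) :
    |b| - |x| + |x - b| = 2 * |if b = 1 then x - b else 0| := by
  obtain ⟨hx₀, hx₁⟩ := hx
  rcases hb with rfl | rfl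
  · simp [abs_of_nonneg hx₀]
  · rw [if_pos rfl, abs_one, abs_of_nonneg hx₀, abs_of_nonpos (by linarith : x - 1 ≤ 0)]
    ring

theorem sum_abs_sub_sum_abs_add_sum_abs_sub_of_binary {ι : Type*} [Fintype ι] {b x : ι → ℝ}
    (hb : ∀ i, b i = 0 ∨ b i = 1) (hx : ∀ i, x i ∈ Set.Icc (0 : ℝ) 1) :
    ∑ i, |b i| - ∑ i, |x i| + ∑ i, |x i - b i| =
      2 * ∑ i, |if b i = 1 then x i - b i else 0| := by
  rw [mul_sum, ← sum_sub_distrib, ← sum_add_distrib]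
  exact sum_congr rfl fun i _ => abs_sub_abs_add_abs_sub_of_binary (hb i) (hx i)

theorem l1_central_inequality_general
    (d : ℕ) (L : EuclideanSpace ℝ (Fin d) → ℝ)
    (lam γ : ℝ)
    (mbar : EuclideanSpace ℝ (Fin d)) (hbin : ∀ i, mbar i = 0 ∨ mbar i = 1)
    (hgrad : ∀ i, |gradient L mbar i| ≤ lam)
    (mstar : EuclideanSpace ℝ (Fin d)) (hms : ∀ i, mstar i ∈ Set.Icc (0 : ℝ) 1)
    (hmin : ∀ m : EuclideanSpace ℝ (Fin d), (∀ i, m i ∈ Set.Icc (0 : ℝ) 1) →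
      L mstar + lam * ∑ i, |mstar i| ≤ L m + lam * ∑ i, |m i|)
    (hsc : L mstar ≥ L mbar + (inner ℝ (gradient L mbar) (mstar - mbar) : ℝ)
      + γ / 2 * ‖mstar - mbar‖ ^ 2) :
    γ / 2 * ‖mstar - mbar‖ ^ 2 ≤
      2 * lam * ∑ i, |if mbar i = 1 then mstar i - mbar i else 0| := by
  have hmbar : ∀ i, mbar i ∈ Set.Icc (0 : ℝ) 1 := fun i => by
    rcases hbin i with h | h <;> simp [h]
  have hopt := hmin mbar hmbar
  have hgrad_pair : -(lam * ∑ i, |mstar i - mbar i|) ≤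
      inner ℝ (gradient L mbar) (mstar - mbar) :=
    neg_le_of_abs_le (EuclideanSpace.abs_inner_le_mul_sum_abs hgrad)
  have hsupport := sum_abs_sub_sum_abs_add_sum_abs_sub_of_binary hbin hms
  rw [mul_assoc, mul_left_comm, ← hsupport]
  linarith

/-- Central intermediate inequality in the proof of Theorem 1 of the paper:
`(γ/2)‖h‖₂² ≤ 2λ‖h_S‖₁` with `h = m* − m̄` and `S = {i : m̄ i = 1}`. -/
theorem l1_central_inequality
    (d : ℕ) (L : EuclideanSpace ℝ (Fin d) → ℝ) (hL : Differentiable ℝ L)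
    (lam γ : ℝ) (hlam : 0 < lam) (hγ : 0 < γ)
    (mbar : EuclideanSpace ℝ (Fin d)) (hbin : ∀ i, mbar i = 0 ∨ mbar i = 1)
    (hgrad : ∀ i, |gradient L mbar i| ≤ lam)
    (mstar : EuclideanSpace ℝ (Fin d)) (hms : ∀ i, mstar i ∈ Set.Icc (0 : ℝ) 1)
    (hmin : ∀ m : EuclideanSpace ℝ (Fin d), (∀ i, m i ∈ Set.Icc (0 : ℝ) 1) →
      L mstar + lam * ∑ i, |mstar i| ≤ L m + lam * ∑ i, |m i|)
    (hsc : L mstar ≥ L mbar + (inner ℝ (gradient L mbar) (mstar - mbar) : ℝ)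
      + γ / 2 * ‖mstar - mbar‖ ^ 2) :
    γ / 2 * ‖mstar - mbar‖ ^ 2 ≤
      2 * lam * ∑ i, |if mbar i = 1 then mstar i - mbar i else 0| :=
  l1_central_inequality_general d L lam γ mbar hbin hgrad mstar hms hmin hsc
end
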